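/- arXiv:0709.4467 — 2 statements merged into one kernel-verified Lean document; each statement's English description precedes it below -/
import Mathlib

section
/- Suppose E[ξ^{-α}]<+∞ for every α≥1, and suppose at least one of the following holds: (i) liminf_{x→+∞} R(x) > 0; (ii) limsup_{x→+∞} u'(kx)/u'(x) < 1 for some k>1; (iii) limsup_{x→0+} I(λx)/I(x) < +∞ for some λ∈(0,1). Then E[u(I(ξ))]<+∞, and Problem (P_a) admits an optimal solution (unique up to a.s. equality) for every a>0. -/
open MeasureTheory Filter Set
open scoped ENNReal

noncomputable def Vval {Ω : Type*} [MeasurableSpace Ω] (P : Measure Ω)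
    (ξ : Ω → ℝ) (u : ℝ → ℝ) (a : ℝ) : ℝ≥0∞ :=
  ⨆ (X : Ω → ℝ) (_ : Measurable X) (_ : ∀ᵐ ω ∂P, 0 ≤ X ω)
    (_ : ∫⁻ ω, ENNReal.ofReal (X ω * ξ ω) ∂P = ENNReal.ofReal a),
    ∫⁻ ω, ENNReal.ofReal (u (X ω)) ∂P

/-- `X` is an optimal solution of Problem (P_a): it is feasible (measurable,
nonnegative a.s., satisfying the budget constraint `E[Xξ] = a`) and its expected
utility dominates that of every feasible solution. -/
def IsOptimal {Ω : Type*} [MeasurableSpace Ω] (P : Measure Ω)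
    (ξ : Ω → ℝ) (u : ℝ → ℝ) (a : ℝ) (X : Ω → ℝ) : Prop :=
  Measurable X ∧ (∀ᵐ ω ∂P, 0 ≤ X ω) ∧
    (∫⁻ ω, ENNReal.ofReal (X ω * ξ ω) ∂P = ENNReal.ofReal a) ∧
    ∀ Y : Ω → ℝ, Measurable Y → (∀ᵐ ω ∂P, 0 ≤ Y ω) →
      (∫⁻ ω, ENNReal.ofReal (Y ω * ξ ω) ∂P = ENNReal.ofReal a) →
      ∫⁻ ω, ENNReal.ofReal (u (Y ω)) ∂P ≤ ∫⁻ ω, ENNReal.ofReal (u (X ω)) ∂P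

/-- `fLag P ξ I lam = E[I(λξ)ξ]`, the function whose equation `f(λ) = a`
determines the Lagrange multiplier. -/
noncomputable def fLag {Ω : Type*} [MeasurableSpace Ω] (P : Measure Ω)
    (ξ : Ω → ℝ) (I : ℝ → ℝ) (lam : ℝ) : ℝ≥0∞ :=
  ∫⁻ ω, ENNReal.ofReal (I (lam * ξ ω) * ξ ω) ∂P

open Topology

/-!
Each of (i)–(iii) gives `I (c * y) ≤ k * I y` for small `y > 0` and some `c < 1`; iterating
this yields a bound `I y ≤ C * y ^ (-α)` near `0`, so the moment assumption makes `E[I(λξ)]`,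
hence `E[u(I(λξ))]` and `f(λ) = E[I(λξ)ξ] ≤ λ⁻¹ E[u(I(λξ))]`, finite for every `λ > 0`.
By dominated convergence and Fatou's lemma `f` is continuous on `(0, ∞)` and runs from `∞`
(at `0`) to `0` (at `∞`), so `f(λ) = a` for some `λ`. Then `X = I(λξ)` maximises the Lagrangian
`y ↦ u y - λ ξ y` pointwise, strictly by strict concavity, which gives optimality and uniqueness.
-/

section Tangent

variable {S : Set ℝ} {f f' : ℝ → ℝ} {x y d : ℝ}

lemma ConcaveOn.le_add_mul_sub_of_hasDerivAt (hfc : ConcaveOn ℝ S f) (hx : x ∈ S) (hy : y ∈ S)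
    (hf : HasDerivAt f d x) : f y ≤ f x + d * (y - x) := by
  rcases lt_trichotomy y x with h | rfl | h
  · have hslope := hfc.le_slope_of_hasDerivAt hy hx h hf
    rw [slope_def_field, le_div_iff₀ (sub_pos.2 h)] at hslope
    linarith
  · simp
  · have hslope := hfc.slope_le_of_hasDerivAt hx hy h hf
    rw [slope_def_field, div_le_iff₀ (sub_pos.2 h)] at hslope
    linarith

namespace StrictConcaveOn

lemma lt_add_mul_sub_of_hasDerivAt (hfc : StrictConcaveOn ℝ S f) (hx : x ∈ S) (hy : y ∈ S)
    (hyx : y ≠ x) (hf : HasDerivAt f d x) : f y < f x + d * (y - x) := by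
  rcases hyx.lt_or_gt with h | h
  · have hslope := hfc.lt_slope_of_hasDerivAt hy hx h hf
    rw [slope_def_field, lt_div_iff₀ (sub_pos.2 h)] at hslope
    linarith
  · have hslope := hfc.slope_lt_of_hasDerivAt hx hy h hf
    rw [slope_def_field, div_lt_iff₀ (sub_pos.2 h)] at hslope
    linarith

lemma strictAntiOn_of_hasDerivAt (hfc : StrictConcaveOn ℝ S f)
    (hf : ∀ x ∈ S, HasDerivAt f (f' x) x) : StrictAntiOn f' S := fun x hx y hy hxy =>
  (hfc.lt_slope_of_hasDerivAt hx hy hxy (hf y hy)).trans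
    (hfc.slope_lt_of_hasDerivAt hx hy hxy (hf x hx))

end StrictConcaveOn

end Tangent

namespace StrictAntiOn

variable {α β : Type*} [LinearOrder α] [LinearOrder β] {f : α → β} {g : β → α} {s : Set α}
  {t : Set β} {x : α} {y : β}

lemma rightInvOn_le_iff (hf : StrictAntiOn f s) (hg : RightInvOn g f t) (hgt : MapsTo g t s)
    (hx : x ∈ s) (hy : y ∈ t) : g y ≤ x ↔ f x ≤ y := by
  rw [← hf.le_iff_ge hx (hgt hy), hg hy]

lemma rightInvOn_lt_iff (hf : StrictAntiOn f s) (hg : RightInvOn g f t) (hgt : MapsTo g t s)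
    (hx : x ∈ s) (hy : y ∈ t) : g y < x ↔ f x < y := by
  rw [← hf.lt_iff_gt hx (hgt hy), hg hy]

lemma strictAntiOn_rightInvOn (hf : StrictAntiOn f s) (hg : RightInvOn g f t)
    (hgt : MapsTo g t s) : StrictAntiOn g t := fun a ha b hb hab => by
  rw [hf.rightInvOn_lt_iff hg hgt (hgt ha) hb, hg ha]
  exact hab

end StrictAntiOn

section InverseMarginalUtility

variable {u' I : ℝ → ℝ} (hu' : StrictAntiOn u' (Ioi 0)) (hu'_pos : MapsTo u' (Ioi 0) (Ioi 0))
  (hI : RightInvOn I u' (Ioi 0)) (hI_pos : MapsTo I (Ioi 0) (Ioi 0))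
include hu' hI hI_pos

lemma continuousOn_of_rightInvOn : ContinuousOn I (Ioi 0) := by
  intro y₀ hy₀
  refine (tendsto_order.2 ⟨fun b hb => ?_, fun b hb => ?_⟩).mono_left nhdsWithin_le_nhds
  · rcases le_or_gt b 0 with hb₀ | hb₀
    · filter_upwards [Ioi_mem_nhds hy₀] with y hy using hb₀.trans_lt (hI_pos hy)
    · have hlt : y₀ < u' b := by
        rwa [← not_le, ← hu'.rightInvOn_le_iff hI hI_pos hb₀ hy₀, not_le]
      filter_upwards [Ioi_mem_nhds hy₀, Iio_mem_nhds hlt] with y hy hyb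
      rwa [← not_le, hu'.rightInvOn_le_iff hI hI_pos hb₀ hy, not_le]
  · have hb₀ : 0 < b := (hI_pos hy₀).trans hb
    have hlt : u' b < y₀ := (hu'.rightInvOn_lt_iff hI hI_pos hb₀ hy₀).1 hb
    filter_upwards [Ioi_mem_nhds hy₀, Ioi_mem_nhds hlt] with y hy hby
    exact (hu'.rightInvOn_lt_iff hI hI_pos hb₀ hy).2 hby

lemma tendsto_atTop_of_rightInvOn : Tendsto I atTop (𝓝 0) := by
  refine tendsto_order.2 ⟨fun b hb => ?_, fun ε hε => ?_⟩
  · filter_upwards [Ioi_mem_atTop 0] with y hy using hb.trans (hI_pos hy)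
  · filter_upwards [Ioi_mem_atTop 0, Ioi_mem_atTop (u' ε)] with y hy hεy
    exact (hu'.rightInvOn_lt_iff hI hI_pos hε hy).2 hεy

include hu'_pos in
lemma tendsto_nhdsGT_zero_of_rightInvOn : Tendsto I (𝓝[>] 0) atTop := by
  refine tendsto_atTop.2 fun M => ?_
  have hM : 0 < max M 1 := lt_max_of_lt_right one_pos
  filter_upwards [self_mem_nhdsWithin, Ioo_mem_nhdsGT (hu'_pos hM)] with y hy hyM
  refine (le_max_left M 1).trans (not_lt.1 fun h => ?_)
  exact lt_asymm hyM.2 ((hu'.rightInvOn_lt_iff hI hI_pos hM hy).1 h)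

include hu'_pos in
lemma eventually_comp_mul_le_mul_of_rightInvOn {k c : ℝ} (hk : 0 < k) (hc : 0 < c)
    (h : ∀ᶠ x in atTop, u' (k * x) ≤ c * u' x) : ∀ᶠ y in 𝓝[>] 0, I (c * y) ≤ k * I y := by
  filter_upwards [(tendsto_nhdsGT_zero_of_rightInvOn hu' hu'_pos hI hI_pos).eventually h,
    self_mem_nhdsWithin] with y hy (hy₀ : 0 < y)
  rw [hI hy₀] at hy
  exact (hu'.rightInvOn_le_iff hI hI_pos (mul_pos hk (hI_pos hy₀)) (mul_pos hc hy₀)).2 hy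

end InverseMarginalUtility

lemma eventually_two_mul_le_rpow_neg_mul {u' u'' : ℝ → ℝ} {K : ℝ}
    (hu'' : ∀ x, 0 < x → HasDerivAt u' (u'' x) x) (hu'_pos : MapsTo u' (Ioi 0) (Ioi 0))
    (hK : ∀ᶠ x in atTop, K ≤ -x * u'' x / u' x) :
    ∀ᶠ x in atTop, u' (2 * x) ≤ (2 : ℝ) ^ (-K) * u' x := by
  obtain ⟨M, hM⟩ := eventually_atTop.1 (hK.and (eventually_gt_atTop 0))
  have hM₀ : 0 < M := (hM M le_rfl).2
  set h : ℝ → ℝ := fun x => Real.log (u' x) + K * Real.log x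
  have hh : ∀ x, 0 < x → HasDerivAt h (u'' x / u' x + K * x⁻¹) x := fun x hx =>
    ((hu'' x hx).log (hu'_pos hx).ne').add ((Real.hasDerivAt_log hx.ne').const_mul K)
  -- `h = log (x ^ K * u' x)`, antitone where the relative risk aversion is at least `K`
  have hanti : AntitoneOn h (Ici M) := by
    refine antitoneOn_of_hasDerivWithinAt_nonpos (convex_Ici M)
      (fun x hx => (hh x (hM₀.trans_le hx)).continuousAt.continuousWithinAt)
      (fun x hx => (hh x (hM₀.trans_le (interior_subset hx))).hasDerivWithinAt)
      (fun x hx => ?_)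
    rw [interior_Ici] at hx
    obtain ⟨hKx, hx₀⟩ := hM x hx.le
    have hux := hu'_pos hx₀
    have : K * x⁻¹ ≤ -(u'' x / u' x) := by
      rw [mul_inv_le_iff₀ hx₀]
      calc K ≤ -x * u'' x / u' x := hKx
        _ = _ := by ring
    linarith
  filter_upwards [eventually_ge_atTop M] with x hx
  have hx₀ : 0 < x := hM₀.trans_le hx
  have h2x := hanti (mem_Ici.2 hx) (mem_Ici.2 (by linarith)) (by linarith : x ≤ 2 * x)
  simp only [h, Real.log_mul two_ne_zero hx₀.ne'] at h2x
  rw [← Real.log_le_log_iff (hu'_pos (by positivity : (0:ℝ) < 2 * x))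
    (mul_pos (by positivity) (hu'_pos hx₀)),
    Real.log_mul (by positivity) (hu'_pos hx₀).ne', Real.log_rpow two_pos]
  linarith

lemma exists_eventually_comp_mul_le_mul {u' u'' I : ℝ → ℝ} (hu' : StrictAntiOn u' (Ioi 0))
    (hu'' : ∀ x, 0 < x → HasDerivAt u' (u'' x) x) (hu'_pos : MapsTo u' (Ioi 0) (Ioi 0))
    (hI : RightInvOn I u' (Ioi 0)) (hI_pos : MapsTo I (Ioi 0) (Ioi 0))
    (hcond : (∃ K : ℝ, 0 < K ∧ ∀ᶠ x in atTop, K ≤ -x * u'' x / u' x) ∨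
      (∃ k : ℝ, 1 < k ∧ ∃ c : ℝ, c < 1 ∧ ∀ᶠ x in atTop, u' (k * x) / u' x ≤ c) ∨
      (∃ lam : ℝ, 0 < lam ∧ lam < 1 ∧
        ∃ C : ℝ, ∀ᶠ x in 𝓝[>] 0, I (lam * x) / I x ≤ C)) :
    ∃ c k : ℝ, 0 < c ∧ c < 1 ∧ 0 ≤ k ∧ ∀ᶠ y in 𝓝[>] 0, I (c * y) ≤ k * I y := by
  rcases hcond with ⟨K, hK, hRRA⟩ | ⟨k, hk, c, hc, hratio⟩ | ⟨c, hc₀, hc₁, C, hratio⟩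
  · refine ⟨2 ^ (-K), 2, by positivity, Real.rpow_lt_one_of_one_lt_of_neg one_lt_two (by linarith),
      zero_le_two, ?_⟩
    exact eventually_comp_mul_le_mul_of_rightInvOn hu' hu'_pos hI hI_pos two_pos (by positivity)
      (eventually_two_mul_le_rpow_neg_mul hu'' hu'_pos hRRA)
  · have hk₀ : 0 < k := one_pos.trans hk
    have hratio' : ∀ᶠ x in atTop, 0 < x ∧ u' (k * x) ≤ c * u' x := by
      filter_upwards [hratio, eventually_gt_atTop 0] with x hx hx₀
      exact ⟨hx₀, (div_le_iff₀ (hu'_pos hx₀)).1 hx⟩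
    obtain ⟨x, hx₀, hx⟩ := hratio'.exists
    have hc₀ : 0 < c := pos_of_mul_pos_left ((hu'_pos (mul_pos hk₀ hx₀)).trans_le hx)
      (hu'_pos hx₀).le
    exact ⟨c, k, hc₀, hc, hk₀.le, eventually_comp_mul_le_mul_of_rightInvOn hu' hu'_pos hI hI_pos
      hk₀ hc₀ (hratio'.mono fun _ => And.right)⟩
  · refine ⟨c, max C 0, hc₀, hc₁, le_max_right _ _, ?_⟩
    filter_upwards [hratio, self_mem_nhdsWithin] with y hy (hy₀ : 0 < y)
    rw [div_le_iff₀ (hI_pos hy₀)] at hy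
    exact hy.trans (mul_le_mul_of_nonneg_right (le_max_left _ _) (hI_pos hy₀).le)

lemma AntitoneOn.exists_le_mul_rpow_neg {f : ℝ → ℝ} {c k y₁ : ℝ} (hf : AntitoneOn f (Ioi 0))
    (hc₀ : 0 < c) (hc₁ : c < 1) (hk : 0 ≤ k) (hy₁ : 0 < y₁) (hfy₁ : 0 ≤ f y₁)
    (h : ∀ y ∈ Ioc 0 y₁, f (c * y) ≤ k * f y) :
    ∃ α : ℝ, 1 ≤ α ∧ ∃ C, ∀ y ∈ Ioc 0 y₁, f y ≤ C * y ^ (-α) := by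
  obtain ⟨m, hm⟩ := exists_pow_lt_of_lt_one (inv_pos.2 (by linarith : 0 < k + 1)) hc₁
  set n := m + 1
  have hkn : k ≤ (c ^ n)⁻¹ := by
    have : c ^ n ≤ (k + 1)⁻¹ := (pow_le_pow_of_le_one hc₀.le hc₁.le (by omega)).trans hm.le
    linarith [(le_inv_comm₀ (by positivity) (by positivity)).1 this]
  have hiter : ∀ j : ℕ, f (c ^ j * y₁) ≤ k ^ j * f y₁ := by
    intro j
    induction j with
    | zero => simp
    | succ j ih =>
      have hmem : c ^ j * y₁ ∈ Ioc 0 y₁ :=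
        ⟨by positivity, mul_le_of_le_one_left hy₁.le (pow_le_one₀ hc₀.le hc₁.le)⟩
      calc f (c ^ (j + 1) * y₁) = f (c * (c ^ j * y₁)) := by ring_nf
        _ ≤ k * (k ^ j * f y₁) := (h _ hmem).trans (mul_le_mul_of_nonneg_left ih hk)
        _ = k ^ (j + 1) * f y₁ := by ring
  refine ⟨n, by norm_cast; omega, f y₁ * y₁ ^ n / c ^ n, fun y hy => ?_⟩
  obtain ⟨j, hj₁, hj₂⟩ := exists_nat_pow_near_of_lt_one (div_pos hy.1 hy₁)
    ((div_le_one hy₁).2 hy.2) hc₀ hc₁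
  rw [lt_div_iff₀ hy₁] at hj₁
  have hy₀ : 0 < y := hy.1
  calc f y ≤ f (c ^ (j + 1) * y₁) := hf (mem_Ioi.2 (by positivity)) hy₀ hj₁.le
    _ ≤ k ^ (j + 1) * f y₁ := hiter _
    _ ≤ ((c ^ n)⁻¹) ^ (j + 1) * f y₁ := by gcongr
    _ = f y₁ * ((c * c ^ j) ^ n)⁻¹ := by
      rw [inv_pow, ← pow_mul, ← pow_succ', ← pow_mul, mul_comm n, mul_comm]
    _ ≤ f y₁ * ((c * (y / y₁)) ^ n)⁻¹ := by gcongr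
    _ = f y₁ * y₁ ^ n / c ^ n * y ^ (-(n : ℝ)) := by
      rw [Real.rpow_neg hy₀.le, Real.rpow_natCast, mul_pow, div_pow]
      field_simp

section Integrability

variable {Ω : Type*} [MeasurableSpace Ω] {P : Measure Ω} {ξ : Ω → ℝ}

lemma lintegral_ofReal_comp_mul_lt_top [IsFiniteMeasure P] {f : ℝ → ℝ} {α C y₁ l : ℝ}
    (hf : AntitoneOn f (Ioi 0)) (hy₁ : 0 < y₁) (hbound : ∀ y ∈ Ioc 0 y₁, f y ≤ C * y ^ (-α))
    (hξ : ∀ᵐ ω ∂P, 0 < ξ ω) (hmom : ∫⁻ ω, ENNReal.ofReal (ξ ω ^ (-α)) ∂P < ⊤) (hl : 0 < l) :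
    ∫⁻ ω, ENNReal.ofReal (f (l * ξ ω)) ∂P < ⊤ := by
  have hle : ∀ᵐ ω ∂P, ENNReal.ofReal (f (l * ξ ω)) ≤
      ENNReal.ofReal (C * l ^ (-α)) * ENNReal.ofReal (ξ ω ^ (-α)) + ENNReal.ofReal (f y₁) := by
    filter_upwards [hξ] with ω hω
    rw [← ENNReal.ofReal_mul' (Real.rpow_nonneg hω.le _)]
    rcases le_or_gt (l * ξ ω) y₁ with hle | hlt
    · refine (ENNReal.ofReal_le_ofReal ?_).trans le_self_add
      calc f (l * ξ ω) ≤ C * (l * ξ ω) ^ (-α) := hbound _ ⟨by positivity, hle⟩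
        _ = C * l ^ (-α) * ξ ω ^ (-α) := by rw [Real.mul_rpow hl.le hω.le, mul_assoc]
    · exact (ENNReal.ofReal_le_ofReal (hf hy₁ (mem_Ioi.2 (by positivity)) hlt.le)).trans
        le_add_self
  calc _ ≤ _ := lintegral_mono_ae hle
    _ = ENNReal.ofReal (C * l ^ (-α)) * ∫⁻ ω, ENNReal.ofReal (ξ ω ^ (-α)) ∂P
        + ENNReal.ofReal (f y₁) * P univ := by
      rw [lintegral_add_right _ measurable_const, lintegral_const_mul' _ _ ENNReal.ofReal_ne_top,
        lintegral_const]
    _ < ⊤ := by finiteness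

lemma lintegral_ofReal_comp_lt_top_of_concaveOn [IsFiniteMeasure P] {u : ℝ → ℝ} {d : ℝ}
    {X : Ω → ℝ} (hu : ConcaveOn ℝ (Ici 0) u) (hd : HasDerivAt u d 1) (hd₀ : 0 ≤ d)
    (hX : ∀ᵐ ω ∂P, 0 ≤ X ω) (hXint : ∫⁻ ω, ENNReal.ofReal (X ω) ∂P < ⊤) :
    ∫⁻ ω, ENNReal.ofReal (u (X ω)) ∂P < ⊤ := by
  have hle : ∀ᵐ ω ∂P, ENNReal.ofReal (u (X ω)) ≤
      ENNReal.ofReal (u 1) + ENNReal.ofReal d * ENNReal.ofReal (X ω) := by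
    filter_upwards [hX] with ω hω
    have htangent := hu.le_add_mul_sub_of_hasDerivAt (mem_Ici.2 zero_le_one) (mem_Ici.2 hω) hd
    rw [← ENNReal.ofReal_mul hd₀]
    exact (ENNReal.ofReal_le_ofReal (by nlinarith)).trans ENNReal.ofReal_add_le
  calc _ ≤ _ := lintegral_mono_ae hle
    _ = ENNReal.ofReal (u 1) * P univ + ENNReal.ofReal d * ∫⁻ ω, ENNReal.ofReal (X ω) ∂P := by
      rw [lintegral_add_left measurable_const, lintegral_const,
        lintegral_const_mul' _ _ ENNReal.ofReal_ne_top]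
    _ < ⊤ := by finiteness

lemma fLag_le_inv_mul_lintegral {u u' I : ℝ → ℝ} {l : ℝ} (hu : ConcaveOn ℝ (Ici 0) u)
    (hu0 : u 0 = 0) (hu_deriv : ∀ x, 0 < x → HasDerivAt u (u' x) x) (hI : RightInvOn I u' (Ioi 0))
    (hI_pos : MapsTo I (Ioi 0) (Ioi 0)) (hξpos : ∀ᵐ ω ∂P, 0 < ξ ω) (hl : 0 < l) :
    fLag P ξ I l ≤ ENNReal.ofReal l⁻¹ * ∫⁻ ω, ENNReal.ofReal (u (I (l * ξ ω))) ∂P := by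
  rw [← lintegral_const_mul' _ _ ENNReal.ofReal_ne_top]
  refine lintegral_mono_ae ?_
  filter_upwards [hξpos] with ω hω
  have hlξ : 0 < l * ξ ω := mul_pos hl hω
  have hx : 0 < I (l * ξ ω) := hI_pos hlξ
  -- the tangent at `I (l ξ)` lies above `(0, u 0)`
  have htangent := hu.le_add_mul_sub_of_hasDerivAt (mem_Ici.2 hx.le) self_mem_Ici (hu_deriv _ hx)
  rw [hI hlξ, hu0] at htangent
  rw [← ENNReal.ofReal_mul (inv_nonneg.2 hl.le)]
  refine ENNReal.ofReal_le_ofReal ?_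
  rw [le_inv_mul_iff₀ hl]
  linarith

end Integrability

lemma tendsto_lintegral_nhds_top {Ω ι : Type*} [MeasurableSpace Ω] {μ : Measure Ω} [NeZero μ]
    {l : Filter ι} [l.IsCountablyGenerated] [l.NeBot] {F : ι → Ω → ℝ≥0∞}
    (hF : ∀ i, AEMeasurable (F i) μ) (h : ∀ᵐ ω ∂μ, Tendsto (fun i => F i ω) l (𝓝 ⊤)) :
    Tendsto (fun i => ∫⁻ ω, F i ω ∂μ) l (𝓝 ⊤) := by
  refine tendsto_of_le_liminf_of_limsup_le ?_ le_top
  calc ⊤ = ∫⁻ ω, liminf (fun i => F i ω) l ∂μ := by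
        rw [lintegral_congr_ae (h.mono fun ω hω => hω.liminf_eq), lintegral_const,
          ENNReal.top_mul (Measure.measure_univ_ne_zero.2 (NeZero.ne μ))]
    _ ≤ _ := lintegral_liminf_le' hF

section Multiplier

variable {Ω : Type*} [MeasurableSpace Ω] {P : Measure Ω} {ξ : Ω → ℝ} {I : ℝ → ℝ}
  (hξ : Measurable ξ) (hξpos : ∀ᵐ ω ∂P, 0 < ξ ω) (hI : Measurable I)
  (hI_anti : AntitoneOn I (Ioi 0))
include hξ hξpos hI

lemma tendsto_fLag_nhdsGT_zero [NeZero P] (hI₀ : Tendsto I (𝓝[>] 0) atTop) :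
    Tendsto (fLag P ξ I) (𝓝[>] 0) (𝓝 ⊤) := by
  refine tendsto_lintegral_nhds_top (fun l => by fun_prop) ?_
  filter_upwards [hξpos] with ω hω
  have hmul : Tendsto (fun l => l * ξ ω) (𝓝[>] 0) (𝓝[>] 0) := by
    refine tendsto_nhdsWithin_iff.2 ⟨?_, ?_⟩
    · simpa using ((continuous_mul_const (ξ ω)).tendsto 0).mono_left nhdsWithin_le_nhds
    · filter_upwards [self_mem_nhdsWithin] with l (hl : 0 < l) using mul_pos hl hω
  exact ENNReal.tendsto_ofReal_atTop.comp ((hI₀.comp hmul).atTop_mul_const hω)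

include hI_anti

lemma tendsto_fLag_atTop (hI_top : Tendsto I atTop (𝓝 0)) (hfin : fLag P ξ I 1 ≠ ⊤) :
    Tendsto (fLag P ξ I) atTop (𝓝 0) := by
  have := tendsto_lintegral_filter_of_dominated_convergence (μ := P) (f := 0)
    (l := atTop) (F := fun l ω => ENNReal.ofReal (I (l * ξ ω) * ξ ω))
    (fun ω => ENNReal.ofReal (I (1 * ξ ω) * ξ ω)) (.of_forall fun l => by fun_prop) ?_ hfin ?_
  · rwa [Pi.zero_def, lintegral_zero] at this
  · filter_upwards [eventually_ge_atTop 1] with l hl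
    filter_upwards [hξpos] with ω hω
    gcongr
    exact hI_anti (mem_Ioi.2 (by positivity)) (mem_Ioi.2 (by positivity)) (by gcongr)
  · filter_upwards [hξpos] with ω hω
    have hlim := (hI_top.comp (tendsto_id.atTop_mul_const hω)).mul_const (ξ ω)
    simpa [Function.comp_def] using (ENNReal.continuous_ofReal.tendsto _).comp hlim

lemma continuousOn_fLag (hI_cont : ContinuousOn I (Ioi 0))
    (hfin : ∀ l, 0 < l → fLag P ξ I l ≠ ⊤) : ContinuousOn (fLag P ξ I) (Ioi 0) := by
  intro l₀ (hl₀ : 0 < l₀)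
  refine ContinuousAt.continuousWithinAt (tendsto_lintegral_filter_of_dominated_convergence
    (fun ω => ENNReal.ofReal (I (l₀ / 2 * ξ ω) * ξ ω)) (.of_forall fun l => by fun_prop) ?_
    (hfin _ (half_pos hl₀)) ?_)
  · filter_upwards [Ioi_mem_nhds (half_lt_self hl₀)] with l (hl : l₀ / 2 < l)
    have hl' : 0 < l := (half_pos hl₀).trans hl
    filter_upwards [hξpos] with ω hω
    gcongr
    exact hI_anti (mem_Ioi.2 (by positivity)) (mem_Ioi.2 (by positivity)) (by gcongr)
  · filter_upwards [hξpos] with ω hω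
    have hIc : ContinuousAt I (l₀ * ξ ω) := hI_cont.continuousAt (Ioi_mem_nhds (by positivity))
    exact ENNReal.continuous_ofReal.continuousAt.comp
      ((hIc.comp (f := fun l => l * ξ ω) (continuous_mul_const _).continuousAt).mul
        continuousAt_const)

lemma exists_fLag_eq [NeZero P] (hI_cont : ContinuousOn I (Ioi 0))
    (hI₀ : Tendsto I (𝓝[>] 0) atTop) (hI_top : Tendsto I atTop (𝓝 0))
    (hfin : ∀ l, 0 < l → fLag P ξ I l ≠ ⊤) {a : ℝ≥0∞} (ha₀ : 0 < a) (ha : a < ⊤) :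
    ∃ l, 0 < l ∧ fLag P ξ I l = a := by
  obtain ⟨l, hl, hla⟩ := isPreconnected_Ioi.intermediate_value_Ioo (l₁ := atTop) (l₂ := 𝓝[>] 0)
    (le_principal_iff.2 (Ioi_mem_atTop 0)) inf_le_right
    (continuousOn_fLag hξ hξpos hI hI_anti hI_cont hfin)
    (tendsto_fLag_atTop hξ hξpos hI hI_anti hI_top (hfin 1 one_pos))
    (tendsto_fLag_nhdsGT_zero hξ hξpos hI hI₀) ⟨ha₀, ha⟩
  exact ⟨l, hl, hla⟩

end Multiplier

section Lagrange

variable {Ω : Type*} [MeasurableSpace Ω] {μ : Measure Ω} {f g p q : Ω → ℝ≥0∞}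

lemma lintegral_le_of_ae_add_le_add (hf : AEMeasurable f μ) (hg : AEMeasurable g μ)
    (hpq : ∫⁻ ω, p ω ∂μ = ∫⁻ ω, q ω ∂μ) (hq : ∫⁻ ω, q ω ∂μ ≠ ⊤)
    (h : ∀ᵐ ω ∂μ, f ω + q ω ≤ g ω + p ω) : ∫⁻ ω, f ω ∂μ ≤ ∫⁻ ω, g ω ∂μ := by
  have hint := lintegral_mono_ae h
  rw [lintegral_add_left' hf, lintegral_add_left' hg, hpq] at hint
  exact (ENNReal.add_le_add_iff_right hq).1 hint

lemma ae_add_eq_add_of_lintegral_le (hf : AEMeasurable f μ) (hg : AEMeasurable g μ)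
    (hp : AEMeasurable p μ) (hpq : ∫⁻ ω, p ω ∂μ = ∫⁻ ω, q ω ∂μ) (hq : ∫⁻ ω, q ω ∂μ ≠ ⊤)
    (hg_fin : ∫⁻ ω, g ω ∂μ ≠ ⊤) (h : ∀ᵐ ω ∂μ, f ω + q ω ≤ g ω + p ω)
    (hgf : ∫⁻ ω, g ω ∂μ ≤ ∫⁻ ω, f ω ∂μ) : ∀ᵐ ω ∂μ, f ω + q ω = g ω + p ω := by
  have hf_fin := ne_top_of_le_ne_top hg_fin (lintegral_le_of_ae_add_le_add hf hg hpq hq h)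
  refine ae_eq_of_ae_le_of_lintegral_le h ?_ (hg.add hp) ?_
  · rw [lintegral_add_left' hf]
    exact ENNReal.add_ne_top.2 ⟨hf_fin, hq⟩
  · rw [lintegral_add_left' hg, lintegral_add_left' hf, hpq]
    gcongr

variable {P : Measure Ω} {ξ X : Ω → ℝ} {u : ℝ → ℝ} {lam a x y s : ℝ}

-- `x` maximises the Lagrangian `y ↦ u y - lam * y * s`
lemma ofReal_add_ofReal_le_of_hasDerivAt (hu : ConcaveOn ℝ (Ici 0) u)
    (hu_nonneg : ∀ x, 0 ≤ x → 0 ≤ u x) (hlam : 0 ≤ lam) (hs : 0 ≤ s) (hx : 0 < x) (hy : 0 ≤ y)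
    (hd : HasDerivAt u (lam * s) x) :
    ENNReal.ofReal (u y) + ENNReal.ofReal (lam * (x * s)) ≤
      ENNReal.ofReal (u x) + ENNReal.ofReal (lam * (y * s)) := by
  have htangent := hu.le_add_mul_sub_of_hasDerivAt (mem_Ici.2 hx.le) (mem_Ici.2 hy) hd
  rw [← ENNReal.ofReal_add (hu_nonneg y hy) (by positivity),
    ← ENNReal.ofReal_add (hu_nonneg x hx.le) (by positivity)]
  exact ENNReal.ofReal_le_ofReal (by linarith)

lemma ofReal_add_ofReal_lt_of_hasDerivAt (hu : StrictConcaveOn ℝ (Ici 0) u)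
    (hu_nonneg : ∀ x, 0 ≤ x → 0 ≤ u x) (hlam : 0 ≤ lam) (hs : 0 ≤ s) (hx : 0 < x) (hy : 0 ≤ y)
    (hyx : y ≠ x) (hd : HasDerivAt u (lam * s) x) :
    ENNReal.ofReal (u y) + ENNReal.ofReal (lam * (x * s)) <
      ENNReal.ofReal (u x) + ENNReal.ofReal (lam * (y * s)) := by
  have htangent := hu.lt_add_mul_sub_of_hasDerivAt (mem_Ici.2 hx.le) (mem_Ici.2 hy) hyx hd
  rw [← ENNReal.ofReal_add (hu_nonneg y hy) (by positivity),
    ← ENNReal.ofReal_add (hu_nonneg x hx.le) (by positivity),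
    ENNReal.ofReal_lt_ofReal_iff_of_nonneg (add_nonneg (hu_nonneg y hy) (by positivity))]
  linarith

lemma lintegral_ofReal_const_mul_of_budget (hlam : 0 ≤ lam) {Y : Ω → ℝ}
    (hY : ∫⁻ ω, ENNReal.ofReal (Y ω * ξ ω) ∂P = ENNReal.ofReal a) :
    ∫⁻ ω, ENNReal.ofReal (lam * (Y ω * ξ ω)) ∂P = ENNReal.ofReal lam * ENNReal.ofReal a := by
  simp_rw [ENNReal.ofReal_mul hlam]
  rw [lintegral_const_mul' _ _ ENNReal.ofReal_ne_top, hY]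

variable (hu_meas : Measurable u) (hu_nonneg : ∀ x, 0 ≤ x → 0 ≤ u x) (hξ : Measurable ξ)
  (hξpos : ∀ᵐ ω ∂P, 0 < ξ ω) (hlam : 0 ≤ lam) (hX : Measurable X) (hXpos : ∀ᵐ ω ∂P, 0 < X ω)
  (hXd : ∀ᵐ ω ∂P, HasDerivAt u (lam * ξ ω) (X ω))
  (hXa : ∫⁻ ω, ENNReal.ofReal (X ω * ξ ω) ∂P = ENNReal.ofReal a)
include hu_meas hu_nonneg hξpos hlam hX hXpos hXd hXa

lemma isOptimal_of_ae_hasDerivAt (hu : ConcaveOn ℝ (Ici 0) u) : IsOptimal P ξ u a X := by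
  refine ⟨hX, hXpos.mono fun _ h => h.le, hXa, fun Y hY hY₀ hYa => ?_⟩
  refine lintegral_le_of_ae_add_le_add (by fun_prop) (by fun_prop)
    (p := fun ω => ENNReal.ofReal (lam * (Y ω * ξ ω)))
    (q := fun ω => ENNReal.ofReal (lam * (X ω * ξ ω))) ?_ ?_ ?_
  · rw [lintegral_ofReal_const_mul_of_budget hlam hYa,
      lintegral_ofReal_const_mul_of_budget hlam hXa]
  · rw [lintegral_ofReal_const_mul_of_budget hlam hXa]
    finiteness
  · filter_upwards [hξpos, hXpos, hXd, hY₀] with ω hs hx hd hy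
    exact ofReal_add_ofReal_le_of_hasDerivAt hu hu_nonneg hlam hs.le hx hy hd

include hξ in
lemma ae_eq_of_isOptimal (hu : StrictConcaveOn ℝ (Ici 0) u)
    (hfin : ∫⁻ ω, ENNReal.ofReal (u (X ω)) ∂P ≠ ⊤) {Y : Ω → ℝ} (hY : IsOptimal P ξ u a Y) :
    Y =ᵐ[P] X := by
  obtain ⟨hYm, hY₀, hYa, hYopt⟩ := hY
  have heq := ae_add_eq_add_of_lintegral_le (by fun_prop) (by fun_prop) (by fun_prop)
    (p := fun ω => ENNReal.ofReal (lam * (Y ω * ξ ω)))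
    (q := fun ω => ENNReal.ofReal (lam * (X ω * ξ ω)))
    (by rw [lintegral_ofReal_const_mul_of_budget hlam hYa,
      lintegral_ofReal_const_mul_of_budget hlam hXa])
    (by rw [lintegral_ofReal_const_mul_of_budget hlam hXa]; finiteness) hfin
    (by
      filter_upwards [hξpos, hXpos, hXd, hY₀] with ω hs hx hd hy
      exact ofReal_add_ofReal_le_of_hasDerivAt hu.concaveOn hu_nonneg hlam hs.le hx hy hd)
    (hYopt X hX (hXpos.mono fun _ h => h.le) hXa)
  filter_upwards [heq, hξpos, hXpos, hXd, hY₀] with ω he hs hx hd hy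
  by_contra hyx
  exact (ofReal_add_ofReal_lt_of_hasDerivAt hu hu_nonneg hlam hs.le hx hy hyx hd).ne he

end Lagrange

theorem solvable_of_moments_general
    {Ω : Type*} [MeasurableSpace Ω] (P : Measure Ω) [IsProbabilityMeasure P]
    (ξ : Ω → ℝ) (hξmeas : Measurable ξ) (hξpos : ∀ᵐ ω ∂P, 0 < ξ ω)
    (u u' u'' : ℝ → ℝ) (hu_meas : Measurable u)
    (hu0 : u 0 = 0) (hu_nonneg : ∀ x : ℝ, 0 ≤ x → 0 ≤ u x)
    (hu_conc : StrictConcaveOn ℝ (Set.Ici (0:ℝ)) u)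
    (hu_deriv : ∀ x : ℝ, 0 < x → HasDerivAt u (u' x) x)
    (hu_deriv2 : ∀ x : ℝ, 0 < x → HasDerivAt u' (u'' x) x)
    (hu'_pos : ∀ x : ℝ, 0 < x → 0 < u' x)
    (I : ℝ → ℝ) (hI_meas : Measurable I) (hI_pos : ∀ y : ℝ, 0 < y → 0 < I y)
    (hI_right : ∀ y : ℝ, 0 < y → u' (I y) = y)
    (hmom : ∀ α : ℝ, 1 ≤ α → ∫⁻ ω, ENNReal.ofReal (ξ ω ^ (-α)) ∂P < ⊤)
    (hcond : (∃ K : ℝ, 0 < K ∧ ∀ᶠ x in atTop, K ≤ -x * u'' x / u' x) ∨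
      (∃ k : ℝ, 1 < k ∧ ∃ c : ℝ, c < 1 ∧ ∀ᶠ x in atTop, u' (k * x) / u' x ≤ c) ∨
      (∃ lam : ℝ, 0 < lam ∧ lam < 1 ∧
        ∃ C : ℝ, ∀ᶠ x in nhdsWithin 0 (Set.Ioi 0), I (lam * x) / I x ≤ C))
    :
    (∫⁻ ω, ENNReal.ofReal (u (I (ξ ω))) ∂P < ⊤) ∧
      ∀ a : ℝ, 0 < a → ∃ X : Ω → ℝ, IsOptimal P ξ u a X ∧
        ∀ Y : Ω → ℝ, IsOptimal P ξ u a Y → Y =ᵐ[P] X := by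
  have hu' : StrictAntiOn u' (Ioi 0) := (hu_conc.subset Ioi_subset_Ici_self
    (convex_Ioi 0)).strictAntiOn_of_hasDerivAt hu_deriv
  have hI_anti : AntitoneOn I (Ioi 0) := (hu'.strictAntiOn_rightInvOn hI_right hI_pos).antitoneOn
  obtain ⟨c, k, hc₀, hc₁, hk, hIck⟩ :=
    exists_eventually_comp_mul_le_mul hu' hu_deriv2 hu'_pos hI_right hI_pos hcond
  obtain ⟨y₁, hy₁, hIck⟩ := mem_nhdsGT_iff_exists_Ioc_subset.1 hIck
  obtain ⟨α, hα, C, hIC⟩ := hI_anti.exists_le_mul_rpow_neg hc₀ hc₁ hk hy₁ (hI_pos _ hy₁).le hIck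
  have hu_fin : ∀ l, 0 < l → ∫⁻ ω, ENNReal.ofReal (u (I (l * ξ ω))) ∂P < ⊤ := fun l hl =>
    lintegral_ofReal_comp_lt_top_of_concaveOn hu_conc.concaveOn (hu_deriv 1 one_pos)
      (hu'_pos 1 one_pos).le (hξpos.mono fun ω hω => (hI_pos _ (mul_pos hl hω)).le)
      (lintegral_ofReal_comp_mul_lt_top hI_anti hy₁ hIC hξpos (hmom α hα) hl)
  have hfLag_fin : ∀ l, 0 < l → fLag P ξ I l ≠ ⊤ := fun l hl =>
    ((fLag_le_inv_mul_lintegral hu_conc.concaveOn hu0 hu_deriv hI_right hI_pos hξpos hl).trans_lt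
      (ENNReal.mul_lt_top ENNReal.ofReal_lt_top (hu_fin l hl))).ne
  refine ⟨by simpa using hu_fin 1 one_pos, fun a ha => ?_⟩
  obtain ⟨lam, hlam, hlam_a⟩ := exists_fLag_eq hξmeas hξpos hI_meas hI_anti
    (continuousOn_of_rightInvOn hu' hI_right hI_pos)
    (tendsto_nhdsGT_zero_of_rightInvOn hu' hu'_pos hI_right hI_pos)
    (tendsto_atTop_of_rightInvOn hu' hI_right hI_pos) hfLag_fin (ENNReal.ofReal_pos.2 ha)
    ENNReal.ofReal_lt_top
  have hXd : ∀ᵐ ω ∂P, HasDerivAt u (lam * ξ ω) (I (lam * ξ ω)) := by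
    filter_upwards [hξpos] with ω hω
    simpa only [hI_right _ (mul_pos hlam hω)] using hu_deriv _ (hI_pos _ (mul_pos hlam hω))
  have hXpos : ∀ᵐ ω ∂P, 0 < I (lam * ξ ω) := hξpos.mono fun ω hω => hI_pos _ (mul_pos hlam hω)
  have hX : Measurable fun ω => I (lam * ξ ω) := by fun_prop
  exact ⟨_, isOptimal_of_ae_hasDerivAt hu_meas hu_nonneg hξpos hlam.le hX hXpos hXd hlam_a
    hu_conc.concaveOn, fun Y => ae_eq_of_isOptimal hu_meas hu_nonneg hξmeas hξpos hlam.le hX hXpos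
    hXd hlam_a hu_conc (hu_fin lam hlam).ne⟩

theorem solvable_of_moments
    {Ω : Type*} [MeasurableSpace Ω] (P : Measure Ω) [IsProbabilityMeasure P]
    (ξ : Ω → ℝ) (hξmeas : Measurable ξ) (hξpos : ∀ᵐ ω ∂P, 0 < ξ ω)
    (u u' u'' : ℝ → ℝ) (hu_meas : Measurable u)
    (hu0 : u 0 = 0) (hu_nonneg : ∀ x : ℝ, 0 ≤ x → 0 ≤ u x)
    (hu_mono : StrictMonoOn u (Set.Ici (0:ℝ)))
    (hu_conc : StrictConcaveOn ℝ (Set.Ici (0:ℝ)) u)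
    (hu_deriv : ∀ x : ℝ, 0 < x → HasDerivAt u (u' x) x)
    (hu_deriv2 : ∀ x : ℝ, 0 < x → HasDerivAt u' (u'' x) x)
    (hu'_pos : ∀ x : ℝ, 0 < x → 0 < u' x)
    (hu'_zero : Tendsto u' (nhdsWithin 0 (Set.Ioi 0)) atTop)
    (hu'_top : Tendsto u' atTop (nhds 0))
    (I : ℝ → ℝ) (hI_meas : Measurable I) (hI_pos : ∀ y : ℝ, 0 < y → 0 < I y)
    (hI_left : ∀ x : ℝ, 0 < x → I (u' x) = x)
    (hI_right : ∀ y : ℝ, 0 < y → u' (I y) = y)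
    (hmom : ∀ α : ℝ, 1 ≤ α → ∫⁻ ω, ENNReal.ofReal (ξ ω ^ (-α)) ∂P < ⊤)
    (hcond : (∃ K : ℝ, 0 < K ∧ ∀ᶠ x in atTop, K ≤ -x * u'' x / u' x) ∨
      (∃ k : ℝ, 1 < k ∧ ∃ c : ℝ, c < 1 ∧ ∀ᶠ x in atTop, u' (k * x) / u' x ≤ c) ∨
      (∃ lam : ℝ, 0 < lam ∧ lam < 1 ∧
        ∃ C : ℝ, ∀ᶠ x in nhdsWithin 0 (Set.Ioi 0), I (lam * x) / I x ≤ C))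
    :
    (∫⁻ ω, ENNReal.ofReal (u (I (ξ ω))) ∂P < ⊤) ∧
      ∀ a : ℝ, 0 < a → ∃ X : Ω → ℝ, IsOptimal P ξ u a X ∧
        ∀ Y : Ω → ℝ, IsOptimal P ξ u a Y → Y =ᵐ[P] X :=
  solvable_of_moments_general P ξ hξmeas hξpos u u' u'' hu_meas hu0 hu_nonneg hu_conc hu_deriv
    hu_deriv2 hu'_pos I hI_meas hI_pos hI_right hmom hcond
end

section
/- Let u(x)=√x for 0≤x≤1 and u(x)=1−ln 2+ln(1+x) for x>1, so that I(y)=(u')^{-1}(y) equals 1/y − 1 for 0<y≤1/2 and 1/(4y²) for y>1/2, and let ξ be a random variable with ξ>0 a.s. and E[ln(1/ξ)]=+∞. Then: (a) f(λ)=E[I(λξ)ξ] ≤ 3/(2λ) < +∞ for every λ>0, so a Lagrange multiplier exists for every a>0; and (b) E[u(I(λξ))]=+∞ for every λ>0; consequently V(a)=+∞ for every a>0, i.e., the problem is ill-posed even though the Lagrange multiplier exists for every a>0. -/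
open MeasureTheory Filter Set
open scoped ENNReal

/-- The utility function of Example `vinfinite`: `u(x) = √x` on `[0,1]` and
`u(x) = 1 - ln 2 + ln (1+x)` for `x > 1`. -/
noncomputable def uEx : ℝ → ℝ :=
  fun x => if x ≤ 1 then Real.sqrt x else 1 - Real.log 2 + Real.log (1 + x)

/-- The inverse of the marginal utility `uEx'`: `I(y) = 1/y - 1` for `0 < y ≤ 1/2`
and `I(y) = 1/(4y²)` for `y > 1/2`. -/
noncomputable def IEx : ℝ → ℝ :=
  fun y => if y ≤ 1 / 2 then 1 / y - 1 else 1 / (4 * y ^ 2)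

/-!
Pointwise `I(λt)t ≤ 1/λ`, so `f(λ) = E[I(λξ)ξ]` is finite, and by dominated convergence it is
continuous on `(0, ∞)`. Since `I(λt)t ≥ 1/(2λ)` whenever `t ≤ 1/(2λ)` and `P(ξ ≤ c) → 1` as
`c → ∞`, `f(λ) → ∞` as `λ → 0⁺`, so the intermediate value theorem yields a multiplier for every
`a > 0`. On the other hand `ln(1/t) ≤ u(I(λt)) + ln(2λ)` for all `t > 0`, so `E[ln(1/ξ)] = ∞`
forces `E[u(I(λξ))] = ∞`; for the multiplier `λ` of `a`, `I(λξ)` is feasible, whence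
`V(a) = ∞`.
-/

open Topology

section Piecewise

variable {f g : ℝ → ℝ} {a x f' : ℝ}

lemma hasDerivAt_ite_le_of_lt (hx : x < a) (hf : HasDerivAt f f' x) :
    HasDerivAt (fun y => if y ≤ a then f y else g y) f' x :=
  hf.congr_of_eventuallyEq <| by
    filter_upwards [Iio_mem_nhds hx] with y hy
    exact if_pos hy.le

lemma hasDerivAt_ite_le_of_gt (hx : a < x) (hg : HasDerivAt g f' x) :
    HasDerivAt (fun y => if y ≤ a then f y else g y) f' x :=
  hg.congr_of_eventuallyEq <| by
    filter_upwards [Ioi_mem_nhds hx] with y hy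
    exact if_neg (not_le.2 hy)

lemma hasDerivAt_ite_le_self (hf : HasDerivAt f f' a) (hg : HasDerivAt g f' a)
    (hfg : f a = g a) : HasDerivAt (fun y => if y ≤ a then f y else g y) f' a := by
  have hleft : HasDerivWithinAt (fun y => if y ≤ a then f y else g y) f' (Iic a) a :=
    hf.hasDerivWithinAt.congr (fun y hy => if_pos hy) (if_pos le_rfl)
  have hright : HasDerivWithinAt (fun y => if y ≤ a then f y else g y) f' (Ici a) a := by
    refine hg.hasDerivWithinAt.congr (fun y hy => ?_) (by simp [hfg])
    rcases (mem_Ici.1 hy).eq_or_lt with rfl | hlt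
    · simp [hfg]
    · exact if_neg (not_le.2 hlt)
  simpa [Iic_union_Ici] using hleft.union hright

end Piecewise

lemma IEx_of_le {y : ℝ} (h : y ≤ 1 / 2) : IEx y = 1 / y - 1 := if_pos h

lemma IEx_of_gt {y : ℝ} (h : 1 / 2 < y) : IEx y = 1 / (4 * y ^ 2) := if_neg (not_le.2 h)

lemma uEx_of_le {x : ℝ} (h : x ≤ 1) : uEx x = Real.sqrt x := if_pos h

lemma uEx_of_one_le {x : ℝ} (h : 1 ≤ x) : uEx x = 1 - Real.log 2 + Real.log (1 + x) := by
  rcases h.eq_or_lt with rfl | hlt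
  · norm_num [uEx]
  · exact if_neg (not_le.2 hlt)

lemma IEx_nonneg {y : ℝ} (hy : 0 < y) : 0 ≤ IEx y := by
  rcases le_or_gt y (1 / 2) with h | h
  · rw [IEx_of_le h, sub_nonneg, le_div_iff₀ hy]
    linarith
  · rw [IEx_of_gt h]
    positivity

lemma uEx_nonneg (x : ℝ) : 0 ≤ uEx x := by
  rcases le_or_gt x 1 with h | h
  · rw [uEx_of_le h]
    exact Real.sqrt_nonneg x
  · rw [uEx_of_one_le h.le]
    linarith [Real.log_le_log (by norm_num : (0 : ℝ) < 2) (by linarith : 2 ≤ 1 + x)]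

lemma uEx_IEx_of_le {y : ℝ} (hy : 0 < y) (h : y ≤ 1 / 2) :
    uEx (IEx y) = 1 - Real.log 2 - Real.log y := by
  have hI : 1 ≤ 1 / y - 1 := by
    rw [le_sub_iff_add_le, le_div_iff₀ hy]
    linarith
  rw [IEx_of_le h, uEx_of_one_le hI, add_sub_cancel, one_div, Real.log_inv]
  ring

lemma hasDerivAt_uEx_IEx {y : ℝ} (hy : 0 < y) : HasDerivAt uEx y (IEx y) := by
  have hsqrt : ∀ x : ℝ, 0 < x → HasDerivAt Real.sqrt (1 / (2 * Real.sqrt x)) x :=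
    fun x hx => Real.hasDerivAt_sqrt hx.ne'
  have hlog : ∀ x : ℝ, 0 < x →
      HasDerivAt (fun z => 1 - Real.log 2 + Real.log (1 + z)) (1 / (1 + x)) x := fun x hx => by
    simpa using (((hasDerivAt_id x).const_add 1).log (by positivity)).const_add (1 - Real.log 2)
  rcases lt_trichotomy y (1 / 2) with h | rfl | h
  · have hI : 1 < 1 / y - 1 := by
      rw [lt_sub_iff_add_lt, lt_div_iff₀ hy]
      linarith
    rw [IEx_of_le h.le]
    refine hasDerivAt_ite_le_of_gt hI ((hlog _ (by linarith)).congr_deriv ?_)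
    field_simp
    ring
  · have hd : HasDerivAt uEx (1 / 2) 1 :=
      hasDerivAt_ite_le_self ((hsqrt 1 one_pos).congr_deriv (by simp))
        ((hlog 1 one_pos).congr_deriv (by norm_num)) (by norm_num)
    rw [IEx_of_le le_rfl]
    norm_num
    exact hd
  · have hpos : 0 < 1 / (4 * y ^ 2) := by positivity
    have hI : 1 / (4 * y ^ 2) < 1 := by
      rw [div_lt_one (by positivity)]
      nlinarith
    have hroot : Real.sqrt (1 / (4 * y ^ 2)) = 1 / (2 * y) := by
      rw [show 1 / (4 * y ^ 2) = (1 / (2 * y)) ^ 2 by ring, Real.sqrt_sq (by positivity)]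
    rw [IEx_of_gt h]
    refine hasDerivAt_ite_le_of_lt hI ((hsqrt _ hpos).congr_deriv ?_)
    rw [hroot]
    field_simp

lemma IEx_mul_nonneg {lam t : ℝ} (hl : 0 < lam) (ht : 0 < t) : 0 ≤ IEx (lam * t) * t :=
  mul_nonneg (IEx_nonneg (mul_pos hl ht)) ht.le

lemma IEx_mul_le {lam t : ℝ} (hl : 0 < lam) (ht : 0 < t) : IEx (lam * t) * t ≤ 1 / lam := by
  rcases le_or_gt (lam * t) (1 / 2) with h | h
  · rw [IEx_of_le h, show (1 / (lam * t) - 1) * t = 1 / lam - t by field_simp]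
    linarith
  · rw [IEx_of_gt h, div_mul_eq_mul_div, one_mul, div_le_div_iff₀ (by positivity) hl]
    nlinarith

lemma le_IEx_mul {lam t : ℝ} (hl : 0 < lam) (ht : 0 < t) (h : t ≤ 1 / (2 * lam)) :
    1 / (2 * lam) ≤ IEx (lam * t) * t := by
  have hlt : lam * t ≤ 1 / 2 := by
    rw [le_div_iff₀ (by positivity)] at h
    linarith
  rw [IEx_of_le hlt, show (1 / (lam * t) - 1) * t = 1 / lam - t by field_simp]
  have : 1 / lam = 2 * (1 / (2 * lam)) := by field_simp
  linarith

lemma log_inv_le_uEx_IEx {lam t : ℝ} (hl : 0 < lam) (ht : 0 < t) :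
    Real.log (1 / t) ≤ uEx (IEx (lam * t)) + Real.log (2 * lam) := by
  have hlog2 : Real.log (2 * lam) = Real.log 2 + Real.log lam := Real.log_mul two_ne_zero hl.ne'
  rcases le_or_gt (lam * t) (1 / 2) with h | h
  · rw [uEx_IEx_of_le (mul_pos hl ht) h, Real.log_mul hl.ne' ht.ne', one_div, Real.log_inv,
      hlog2]
    linarith
  · have hinv : 1 / t < 2 * lam := by
      rw [div_lt_iff₀ ht]
      linarith
    linarith [Real.log_le_log (by positivity) hinv.le, uEx_nonneg (IEx (lam * t))]

lemma measurable_IEx : Measurable IEx :=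
  Measurable.ite (measurableSet_le measurable_id measurable_const)
    ((measurable_const.div measurable_id).sub measurable_const)
    (measurable_const.div ((measurable_id.pow_const 2).const_mul 4))

lemma continuousOn_IEx : ContinuousOn IEx (Ioi 0) := by
  refine ContinuousOn.if ?_ ?_ ?_
  · rintro y ⟨-, hy⟩
    rw [show {a : ℝ | a ≤ 1 / 2} = Iic (1 / 2) from rfl, frontier_Iic] at hy
    rw [hy]
    norm_num
  · refine (continuousOn_const.div continuousOn_id fun y hy => ?_).sub continuousOn_const
    exact (mem_Ioi.1 hy.1).ne'
  · refine continuousOn_const.div (by fun_prop) fun y hy => ?_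
    have := mem_Ioi.1 hy.1
    positivity

lemma exists_pos_eq_of_continuousOn_of_tendsto_atTop {g : ℝ → ℝ} (hg : ContinuousOn g (Ioi 0))
    (h0 : Tendsto g (𝓝[>] 0) atTop) {a b : ℝ} (hb : 0 < b) (hgb : g b ≤ a) :
    ∃ x, 0 < x ∧ g x = a := by
  obtain ⟨c, hca, hc, hcb⟩ : ∃ c, a ≤ g c ∧ 0 < c ∧ c ≤ b :=
    ((h0.eventually (eventually_ge_atTop a)).and (Ioc_mem_nhdsGT hb)).exists
  obtain ⟨x, hx, hgx⟩ :=
    intermediate_value_Icc' hcb (hg.mono fun y hy => hc.trans_le hy.1) ⟨hgb, hca⟩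
  exact ⟨x, hc.trans_le hx.1, hgx⟩

section Measure

variable {Ω : Type*} [MeasurableSpace Ω] {P : Measure Ω}

lemma lintegral_ofReal_eq_top_of_le_add_const [IsFiniteMeasure P] {f h : Ω → ℝ} (C : ℝ)
    (hf : ∫⁻ ω, ENNReal.ofReal (f ω) ∂P = ⊤) (hfh : ∀ᵐ ω ∂P, f ω ≤ h ω + C) :
    ∫⁻ ω, ENNReal.ofReal (h ω) ∂P = ⊤ := by
  have hle : ⊤ ≤ ∫⁻ ω, ENNReal.ofReal (h ω) ∂P + ENNReal.ofReal C * P univ := calc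
    ⊤ = ∫⁻ ω, ENNReal.ofReal (f ω) ∂P := hf.symm
    _ ≤ ∫⁻ ω, (ENNReal.ofReal (h ω) + ENNReal.ofReal C) ∂P :=
      lintegral_mono_ae <| hfh.mono fun ω hω =>
        (ENNReal.ofReal_le_ofReal hω).trans ENNReal.ofReal_add_le
    _ = ∫⁻ ω, ENNReal.ofReal (h ω) ∂P + ENNReal.ofReal C * P univ := by
      rw [lintegral_add_right _ measurable_const, lintegral_const]
  simpa [ENNReal.mul_eq_top, measure_ne_top] using top_le_iff.1 hle

lemma tendsto_measureReal_le_atTop [IsProbabilityMeasure P] {ξ : Ω → ℝ} (hξ : Measurable ξ) :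
    Tendsto (fun c => P.real {ω | ξ ω ≤ c}) atTop (𝓝 1) := by
  have h := tendsto_measure_Iic_atTop (P.map ξ)
  simp only [Measure.map_apply hξ measurableSet_Iic, Measure.map_apply hξ MeasurableSet.univ,
    preimage_univ, measure_univ] at h
  exact (ENNReal.tendsto_toReal ENNReal.one_ne_top).comp h

lemma lintegral_le_Vval {ξ X : Ω → ℝ} {u : ℝ → ℝ} {a : ℝ} (hX : Measurable X)
    (hX0 : ∀ᵐ ω ∂P, 0 ≤ X ω) (hXa : ∫⁻ ω, ENNReal.ofReal (X ω * ξ ω) ∂P = ENNReal.ofReal a) :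
    ∫⁻ ω, ENNReal.ofReal (u (X ω)) ∂P ≤ Vval P ξ u a :=
  le_iSup_of_le X <| le_iSup_of_le hX <| le_iSup_of_le hX0 <| le_iSup_of_le hXa le_rfl

end Measure

section Example

variable {Ω : Type*} [MeasurableSpace Ω] {P : Measure Ω} {ξ : Ω → ℝ}

lemma measurable_IEx_mul (hξ : Measurable ξ) (lam : ℝ) :
    Measurable fun ω => IEx (lam * ξ ω) * ξ ω :=
  (measurable_IEx.comp (hξ.const_mul lam)).mul hξ

lemma integrable_IEx_mul [IsFiniteMeasure P] (hξ : Measurable ξ) (hξpos : ∀ᵐ ω ∂P, 0 < ξ ω)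
    {lam : ℝ} (hl : 0 < lam) : Integrable (fun ω => IEx (lam * ξ ω) * ξ ω) P := by
  refine (integrable_const (1 / lam)).mono' (measurable_IEx_mul hξ lam).aestronglyMeasurable ?_
  filter_upwards [hξpos] with ω hω
  rw [Real.norm_of_nonneg (IEx_mul_nonneg hl hω)]
  exact IEx_mul_le hl hω

lemma fLag_IEx_eq [IsFiniteMeasure P] (hξ : Measurable ξ) (hξpos : ∀ᵐ ω ∂P, 0 < ξ ω)
    {lam : ℝ} (hl : 0 < lam) :
    fLag P ξ IEx lam = ENNReal.ofReal (∫ ω, IEx (lam * ξ ω) * ξ ω ∂P) :=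
  (ofReal_integral_eq_lintegral_ofReal (integrable_IEx_mul hξ hξpos hl)
    (hξpos.mono fun _ hω => IEx_mul_nonneg hl hω)).symm

lemma fLag_IEx_le [IsProbabilityMeasure P] (hξpos : ∀ᵐ ω ∂P, 0 < ξ ω) {lam : ℝ} (hl : 0 < lam) :
    fLag P ξ IEx lam ≤ ENNReal.ofReal (1 / lam) := calc
  fLag P ξ IEx lam ≤ ∫⁻ _, ENNReal.ofReal (1 / lam) ∂P :=
    lintegral_mono_ae <| hξpos.mono fun _ hω => ENNReal.ofReal_le_ofReal (IEx_mul_le hl hω)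
  _ = ENNReal.ofReal (1 / lam) := by simp

lemma continuousOn_integral_IEx_mul [IsFiniteMeasure P] (hξ : Measurable ξ)
    (hξpos : ∀ᵐ ω ∂P, 0 < ξ ω) :
    ContinuousOn (fun lam => ∫ ω, IEx (lam * ξ ω) * ξ ω ∂P) (Ioi 0) := by
  intro lam₀ hl₀
  have hl₀ : 0 < lam₀ := hl₀
  refine (continuousAt_of_dominated (bound := fun _ => 2 / lam₀)
    (Eventually.of_forall fun lam => (measurable_IEx_mul hξ lam).aestronglyMeasurable)
    ?_ (integrable_const _) ?_).continuousWithinAt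
  · filter_upwards [Ioi_mem_nhds (half_lt_self hl₀)] with lam hlam
    have hlam : lam₀ / 2 < lam := hlam
    have hl : 0 < lam := by linarith
    filter_upwards [hξpos] with ω hω
    rw [Real.norm_of_nonneg (IEx_mul_nonneg hl hω)]
    refine (IEx_mul_le hl hω).trans ?_
    rw [div_le_div_iff₀ hl hl₀]
    linarith
  · filter_upwards [hξpos] with ω hω
    have hI : ContinuousAt (fun lam => IEx (lam * ξ ω)) lam₀ :=
      (continuousOn_IEx.continuousAt (Ioi_mem_nhds (mul_pos hl₀ hω))).comp
        (f := fun lam => lam * ξ ω) (continuous_mul_const (ξ ω)).continuousAt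
    exact hI.mul continuousAt_const

lemma mul_measureReal_le_integral_IEx_mul [IsFiniteMeasure P] (hξ : Measurable ξ)
    (hξpos : ∀ᵐ ω ∂P, 0 < ξ ω) {lam : ℝ} (hl : 0 < lam) :
    1 / (2 * lam) * P.real {ω | ξ ω ≤ 1 / (2 * lam)} ≤ ∫ ω, IEx (lam * ξ ω) * ξ ω ∂P := by
  have hs : MeasurableSet {ω | ξ ω ≤ 1 / (2 * lam)} := measurableSet_le hξ measurable_const
  rw [mul_comm, ← smul_eq_mul, ← integral_indicator_const _ hs]
  refine integral_mono_ae ((integrable_const _).indicator hs) (integrable_IEx_mul hξ hξpos hl) ?_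
  filter_upwards [hξpos] with ω hω
  by_cases hω' : ξ ω ≤ 1 / (2 * lam)
  · rw [indicator_of_mem (show ω ∈ {ω | ξ ω ≤ 1 / (2 * lam)} from hω')]
    exact le_IEx_mul hl hω hω'
  · rw [indicator_of_notMem (show ω ∉ {ω | ξ ω ≤ 1 / (2 * lam)} from hω')]
    exact IEx_mul_nonneg hl hω

lemma tendsto_integral_IEx_mul_nhdsGT_zero [IsProbabilityMeasure P] (hξ : Measurable ξ)
    (hξpos : ∀ᵐ ω ∂P, 0 < ξ ω) :
    Tendsto (fun lam => ∫ ω, IEx (lam * ξ ω) * ξ ω ∂P) (𝓝[>] 0) atTop := by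
  have hinv : Tendsto (fun lam : ℝ => 1 / (2 * lam)) (𝓝[>] 0) atTop :=
    (tendsto_inv_nhdsGT_zero.const_mul_atTop (by norm_num : (0 : ℝ) < 2⁻¹)).congr fun lam => by
      rw [one_div, mul_inv]
  refine tendsto_atTop_mono' _ ?_
    (hinv.atTop_mul_pos one_pos ((tendsto_measureReal_le_atTop (P := P) hξ).comp hinv))
  filter_upwards [self_mem_nhdsWithin] with lam hl
  exact mul_measureReal_le_integral_IEx_mul hξ hξpos hl

lemma exists_fLag_IEx_eq [IsProbabilityMeasure P] (hξ : Measurable ξ) (hξpos : ∀ᵐ ω ∂P, 0 < ξ ω)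
    {a : ℝ} (ha : 0 < a) : ∃ lam, 0 < lam ∧ fLag P ξ IEx lam = ENNReal.ofReal a := by
  have hle : ∫ ω, IEx (1 / a * ξ ω) * ξ ω ∂P ≤ a := by
    have h := fLag_IEx_le hξpos (one_div_pos.2 ha)
    rwa [fLag_IEx_eq hξ hξpos (one_div_pos.2 ha), one_div_one_div,
      ENNReal.ofReal_le_ofReal_iff ha.le] at h
  obtain ⟨lam, hl, heq⟩ := exists_pos_eq_of_continuousOn_of_tendsto_atTop
    (continuousOn_integral_IEx_mul hξ hξpos) (tendsto_integral_IEx_mul_nhdsGT_zero hξ hξpos)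
    (one_div_pos.2 ha) hle
  exact ⟨lam, hl, by rw [fLag_IEx_eq hξ hξpos hl, heq]⟩

lemma lintegral_uEx_IEx_eq_top [IsFiniteMeasure P] (hξpos : ∀ᵐ ω ∂P, 0 < ξ ω)
    (hlog : ∫⁻ ω, ENNReal.ofReal (Real.log (1 / ξ ω)) ∂P = ⊤) {lam : ℝ} (hl : 0 < lam) :
    ∫⁻ ω, ENNReal.ofReal (uEx (IEx (lam * ξ ω))) ∂P = ⊤ :=
  lintegral_ofReal_eq_top_of_le_add_const _ hlog <|
    hξpos.mono fun _ hω => log_inv_le_uEx_IEx hl hω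

end Example

theorem illposed_with_multiplier
    {Ω : Type*} [MeasurableSpace Ω] (P : Measure Ω) [IsProbabilityMeasure P]
    (ξ : Ω → ℝ) (hξmeas : Measurable ξ) (hξpos : ∀ᵐ ω ∂P, 0 < ξ ω)
    (hlog : ∫⁻ ω, ENNReal.ofReal (Real.log (1 / ξ ω)) ∂P = ⊤)
    :
    (∀ y : ℝ, 0 < y → deriv uEx (IEx y) = y) ∧
      (∀ lam : ℝ, 0 < lam →
        fLag P ξ IEx lam ≤ ENNReal.ofReal (3 / (2 * lam))) ∧
      (∀ a : ℝ, 0 < a → ∃ lam : ℝ, 0 < lam ∧ fLag P ξ IEx lam = ENNReal.ofReal a) ∧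
      (∀ lam : ℝ, 0 < lam →
        ∫⁻ ω, ENNReal.ofReal (uEx (IEx (lam * ξ ω))) ∂P = ⊤) ∧
      (∀ a : ℝ, 0 < a → Vval P ξ uEx a = ⊤) := by
  refine ⟨fun y hy => (hasDerivAt_uEx_IEx hy).deriv, fun lam hl => ?_,
    fun a ha => exists_fLag_IEx_eq hξmeas hξpos ha,
    fun lam hl => lintegral_uEx_IEx_eq_top hξpos hlog hl, fun a ha => ?_⟩
  · refine (fLag_IEx_le hξpos hl).trans (ENNReal.ofReal_le_ofReal ?_)
    rw [div_le_div_iff₀ hl (by positivity)]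
    linarith
  · obtain ⟨lam, hl, hbudget⟩ := exists_fLag_IEx_eq hξmeas hξpos ha
    refine top_le_iff.1 ?_
    rw [← lintegral_uEx_IEx_eq_top hξpos hlog hl]
    exact lintegral_le_Vval (measurable_IEx.comp (hξmeas.const_mul lam))
      (hξpos.mono fun _ hω => IEx_nonneg (mul_pos hl hω)) hbudget
end
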